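/- arXiv:1505.03645 — 2 statements merged into one kernel-verified Lean document; each statement's English description precedes it below -/
import Mathlib

section
/- Assume either μλ + μ + λ < 0 or (μλ + μ + λ = 0 and μ < −1), and assume either μλ − μ − λ < 0 or (μλ − μ − λ = 0 and μ > 1). Then H_{μλ} has an even eigenvalue ζ₁ with ζ₁ < 0 and an even eigenvalue ζ₂ with ζ₂ > 2; that is, it has one eigenvalue below the bottom of the essential spectrum [0,2] and one above its top. -/
open MeasureTheory Real Filter Topology

/-- The potential `v(0) = μ`, `v(±1) = λ/2`, `v(x) = 0` for `|x| > 1`. -/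
noncomputable def pot (μ lam : ℝ) (x : ℤ) : ℝ :=
  if x = 0 then μ else if x = 1 ∨ x = -1 then lam / 2 else 0

/-- A real number `z` is an *even eigenvalue* of the discrete Schrödinger operator
`H_{μλ}` on `ℓ²(ℤ; ℂ)`, `(H_{μλ}ψ)(x) = ψ(x) − (ψ(x+1) + ψ(x−1))/2 + v(x)ψ(x)`,
if there is a nonzero even `ψ ∈ ℓ²(ℤ; ℂ)` with `H_{μλ}ψ = zψ`. -/
def IsEvenEigenvalue (μ lam z : ℝ) : Prop :=
  ∃ ψ : lp (fun _ : ℤ => ℂ) 2, ψ ≠ 0 ∧ (∀ x : ℤ, ψ (-x) = ψ x) ∧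
    ∀ x : ℤ, ψ x - (ψ (x + 1) + ψ (x - 1)) / 2 + (pot μ lam x : ℂ) * ψ x = (z : ℂ) * ψ x

lemma summable_pow_natAbs {r : ℝ} (h0 : 0 ≤ r) (h1 : r < 1) :
    Summable (fun x : ℤ => r ^ x.natAbs) := by
  apply Summable.of_nat_of_neg <;>
    simpa using summable_geometric_of_lt_one h0 h1

lemma pot_even (μ lam : ℝ) (x : ℤ) : pot μ lam (-x) = pot μ lam x := by
  have h1 : (-x = 0) ↔ (x = 0) := by omega
  have h2 : (-x = 1 ∨ -x = -1) ↔ (x = 1 ∨ x = -1) := by omega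
  simp only [pot, h1, h2]

lemma isEvenEig_of_root (μ lam t : ℝ) (ht0 : t ≠ 0) (ht1 : |t| < 1)
    (hroot : (t ^ 2 + 2 * μ * t + 1) * (1 + lam * t) = 2 * t ^ 2) :
    IsEvenEigenvalue μ lam (1 - (t + 1 / t) / 2) := by
  set f : ∀ _ : ℤ, ℂ :=
    fun x => if x = 0 then ((1 + lam * t : ℝ) : ℂ) else ((t ^ x.natAbs : ℝ) : ℂ) with hfdef
  have hC : (0:ℝ) ≤ (1 + lam * t) ^ 2 + 1 := by positivity
  have hmem : Memℓp f 2 := by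
    apply memℓp_gen
    have hTR : (2 : ENNReal).toReal = ((2 : ℕ) : ℝ) := by norm_num
    have hsum : Summable (fun x : ℤ => ((1 + lam * t) ^ 2 + 1) * (t ^ 2) ^ x.natAbs) :=
      (summable_pow_natAbs (by positivity)
        (by nlinarith [sq_abs t, abs_nonneg t])).mul_left _
    apply Summable.of_nonneg_of_le (fun x => by positivity) _ hsum
    intro x
    rw [hTR, Real.rpow_natCast]
    by_cases hx : x = 0
    · subst hx
      simp only [hfdef, if_pos rfl, Complex.norm_real, Int.natAbs_zero, pow_zero, mul_one]
      rw [Real.norm_eq_abs, sq_abs]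
      nlinarith
    · simp only [hfdef, if_neg hx, Complex.norm_real]
      rw [Real.norm_eq_abs, sq_abs]
      have : (t ^ x.natAbs) ^ 2 = (t ^ 2) ^ x.natAbs := by ring
      rw [this]
      nlinarith [pow_nonneg (sq_nonneg t) x.natAbs]
  refine ⟨⟨f, hmem⟩, ?_, ?_, ?_⟩
  · intro h
    have h1 : f 1 = 0 := by
      have := congrArg Subtype.val h
      exact congrFun this 1
    simp only [hfdef] at h1
    norm_num at h1
    exact ht0 h1
  · intro x
    show f (-x) = f x
    simp only [hfdef, neg_eq_zero, Int.natAbs_neg]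
  · have heven : ∀ x : ℤ, f (-x) = f x := by
      intro x; simp only [hfdef, neg_eq_zero, Int.natAbs_neg]
    have ht0' : (t : ℂ) ≠ 0 := Complex.ofReal_ne_zero.mpr ht0
    have hroot' : ((t : ℂ) ^ 2 + 2 * μ * t + 1) * (1 + lam * t) = 2 * t ^ 2 := by
      exact_mod_cast congrArg (Complex.ofReal) hroot
    have key : ∀ m : ℤ, 0 ≤ m →
        f m - (f (m + 1) + f (m - 1)) / 2 + (pot μ lam m : ℂ) * f m
          = ((1 - (t + 1 / t) / 2 : ℝ) : ℂ) * f m := by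
      intro m hm
      lift m to ℕ using hm
      match m with
      | 0 =>
        have hp : pot μ lam ((0 : ℕ) : ℤ) = μ := by simp [pot]
        rw [hp]
        simp only [hfdef, Nat.cast_zero, zero_add, zero_sub]
        norm_num
        push_cast
        field_simp
        linear_combination hroot'
      | 1 =>
        have hp : pot μ lam ((1 : ℕ) : ℤ) = lam / 2 := by simp [pot]
        rw [hp]
        have e2 : ((1 : ℕ) : ℤ) + 1 = 2 := rfl
        have e3 : ((1 : ℕ) : ℤ) - 1 = 0 := rfl
        rw [e2, e3]
        simp only [hfdef, Nat.cast_one]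
        norm_num
        push_cast
        field_simp
        ring
      | (k + 2) =>
        have hx0 : ((k + 2 : ℕ) : ℤ) ≠ 0 := by omega
        have hx1 : ¬(((k + 2 : ℕ) : ℤ) = 1 ∨ ((k + 2 : ℕ) : ℤ) = -1) := by omega
        have hp : pot μ lam ((k + 2 : ℕ) : ℤ) = 0 := by
          simp only [pot, if_neg hx0, if_neg hx1]
        have e2 : ((k + 2 : ℕ) : ℤ) + 1 = ((k + 3 : ℕ) : ℤ) := by push_cast; ring
        have e3 : ((k + 2 : ℕ) : ℤ) - 1 = ((k + 1 : ℕ) : ℤ) := by push_cast; ring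
        rw [e2, e3, hp]
        have hne2 : ((k + 2 : ℕ) : ℤ) ≠ 0 := hx0
        have hne3 : ((k + 3 : ℕ) : ℤ) ≠ 0 := by omega
        have hne1 : ((k + 1 : ℕ) : ℤ) ≠ 0 := by omega
        simp only [hfdef, if_neg hne1, if_neg hne2, if_neg hne3, Int.natAbs_natCast]
        push_cast
        field_simp
        ring
    intro x
    show f x - (f (x + 1) + f (x - 1)) / 2 + ((pot μ lam x : ℝ) : ℂ) * f x
      = ((1 - (t + 1 / t) / 2 : ℝ) : ℂ) * f x
    rcases le_or_gt 0 x with hx | hx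
    · exact key x hx
    · have e1 : f x = f (-x) := by
        have := heven (-x); rwa [neg_neg] at this
      have e2 : f (x + 1) = f (-x - 1) := by
        have := heven (-x - 1)
        rwa [show -(-x - 1) = x + 1 by ring] at this
      have e3 : f (x - 1) = f (-x + 1) := by
        have := heven (-x + 1)
        rwa [show -(-x + 1) = x - 1 by ring] at this
      have e4 : pot μ lam x = pot μ lam (-x) := by
        have := pot_even μ lam (-x); rwa [neg_neg] at this
      rw [e1, e2, e3, e4]
      have := key (-x) (by omega)
      linear_combination this
  
lemma exists_root_pos (μ lam : ℝ)
    (h1 : μ * lam + μ + lam < 0 ∨ (μ * lam + μ + lam = 0 ∧ μ < -1)) :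
    ∃ t : ℝ, 0 < t ∧ t < 1 ∧ (t ^ 2 + 2 * μ * t + 1) * (1 + lam * t) = 2 * t ^ 2 := by
  rcases h1 with h1 | ⟨he, hμ⟩
  · set F : ℝ → ℝ := fun t => (t ^ 2 + 2 * μ * t + 1) * (1 + lam * t) - 2 * t ^ 2 with hF
    have hcont : ContinuousOn F (Set.Icc (0:ℝ) 1) := by fun_prop
    have hF1 : F 1 = 2 * (μ * lam + μ + lam) := by simp only [hF]; ring
    have hF0 : F 0 = 1 := by simp only [hF]; ring
    have h0mem : (0:ℝ) ∈ Set.Ioo (F 1) (F 0) := by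
      rw [hF1, hF0]; constructor <;> nlinarith
    obtain ⟨t, htmem, htF⟩ := intermediate_value_Ioo' (by norm_num) hcont h0mem
    exact ⟨t, htmem.1, htmem.2, by linear_combination htF⟩
  · set Q : ℝ → ℝ := fun t => lam * t ^ 2 - (1 + 2 * μ + lam) * t - 1 with hQ
    have hcont : ContinuousOn Q (Set.Icc (0:ℝ) 1) := by fun_prop
    have hQ0 : Q 0 = -1 := by simp only [hQ]; ring
    have hQ1 : Q 1 = -2 * (μ + 1) := by simp only [hQ]; ring
    have h0mem : (0:ℝ) ∈ Set.Ioo (Q 0) (Q 1) := by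
      rw [hQ0, hQ1]; constructor <;> nlinarith
    obtain ⟨t, htmem, htQ⟩ := intermediate_value_Ioo (by norm_num) hcont h0mem
    refine ⟨t, htmem.1, htmem.2, ?_⟩
    simp only [hQ] at htQ
    linear_combination (t - 1) * htQ + 2 * t ^ 2 * he

lemma exists_root_neg (μ lam : ℝ)
    (h2 : μ * lam - μ - lam < 0 ∨ (μ * lam - μ - lam = 0 ∧ 1 < μ)) :
    ∃ t : ℝ, -1 < t ∧ t < 0 ∧ (t ^ 2 + 2 * μ * t + 1) * (1 + lam * t) = 2 * t ^ 2 := by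
  rcases h2 with h2 | ⟨he, hμ⟩
  · set F : ℝ → ℝ := fun t => (t ^ 2 + 2 * μ * t + 1) * (1 + lam * t) - 2 * t ^ 2 with hF
    have hcont : ContinuousOn F (Set.Icc (-1:ℝ) 0) := by fun_prop
    have hFm1 : F (-1) = 2 * (μ * lam - μ - lam) := by simp only [hF]; ring
    have hF0 : F 0 = 1 := by simp only [hF]; ring
    have h0mem : (0:ℝ) ∈ Set.Ioo (F (-1)) (F 0) := by
      rw [hFm1, hF0]; constructor <;> nlinarith
    obtain ⟨t, htmem, htF⟩ := intermediate_value_Ioo (by norm_num) hcont h0mem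
    exact ⟨t, htmem.1, htmem.2, by linear_combination htF⟩
  · set R : ℝ → ℝ := fun t => lam * t ^ 2 + (2 * μ + lam - 1) * t + 1 with hR
    have hcont : ContinuousOn R (Set.Icc (-1:ℝ) 0) := by fun_prop
    have hRm1 : R (-1) = 2 - 2 * μ := by simp only [hR]; ring
    have hR0 : R 0 = 1 := by simp only [hR]; ring
    have h0mem : (0:ℝ) ∈ Set.Ioo (R (-1)) (R 0) := by
      rw [hRm1, hR0]; constructor <;> nlinarith
    obtain ⟨t, htmem, htR⟩ := intermediate_value_Ioo (by norm_num) hcont h0mem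
    refine ⟨t, htmem.1, htmem.2, ?_⟩
    simp only [hR] at htR
    linear_combination (t + 1) * htR + 2 * t ^ 2 * he

/-- Region `G_{11}`: assume either `μλ + μ + λ < 0` or (`μλ + μ + λ = 0` and `μ < −1`),
and either `μλ − μ − λ < 0` or (`μλ − μ − λ = 0` and `μ > 1`). Then `H_{μλ}` has an even
eigenvalue `ζ₁ < 0` and an even eigenvalue `ζ₂ > 2`. -/
theorem region_G11 (μ lam : ℝ)
    (h1 : μ * lam + μ + lam < 0 ∨ (μ * lam + μ + lam = 0 ∧ μ < -1))
    (h2 : μ * lam - μ - lam < 0 ∨ (μ * lam - μ - lam = 0 ∧ 1 < μ)) :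
    ∃ ζ₁ ζ₂ : ℝ, ζ₁ < 0 ∧ IsEvenEigenvalue μ lam ζ₁ ∧
      2 < ζ₂ ∧ IsEvenEigenvalue μ lam ζ₂ := by
  obtain ⟨t₁, ht₁0, ht₁1, hroot₁⟩ := exists_root_pos μ lam h1
  obtain ⟨t₂, ht₂m1, ht₂0, hroot₂⟩ := exists_root_neg μ lam h2
  refine ⟨1 - (t₁ + 1 / t₁) / 2, 1 - (t₂ + 1 / t₂) / 2, ?_, ?_, ?_, ?_⟩
  · have h : (2:ℝ) < t₁ + 1 / t₁ := by
      rw [← sub_pos]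
      have hne : t₁ ≠ 0 := ne_of_gt ht₁0
      have : t₁ + 1 / t₁ - 2 = (1 - t₁) ^ 2 / t₁ := by field_simp; ring
      rw [this]
      exact div_pos (pow_pos (by linarith) 2) ht₁0
    linarith
  · exact isEvenEig_of_root μ lam t₁ (ne_of_gt ht₁0)
      (by rw [abs_lt]; constructor <;> linarith) hroot₁
  · have h : t₂ + 1 / t₂ < -2 := by
      rw [← sub_neg]
      have hne : t₂ ≠ 0 := ne_of_lt ht₂0
      have : t₂ + 1 / t₂ - (-2) = (1 + t₂) ^ 2 / t₂ := by
        field_simp; ring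
      rw [this]
      exact div_neg_of_pos_of_neg (pow_pos (by linarith) 2) ht₂0
    linarith
  · exact isEvenEig_of_root μ lam t₂ (ne_of_lt ht₂0)
      (by rw [abs_lt]; constructor <;> linarith) hroot₂
end

section
/- Assume either μλ + μ + λ < 0 or (μλ + μ + λ = 0 and μ < −1), and assume μ < 1 and μλ − μ − λ ≥ 0. Then H_{μλ} has no even eigenvalue in (2, +∞), and it has exactly one even eigenvalue outside [0,2], which lies in (−∞, 0). -/
/-!
For `z ∉ [0, 2]` let `t` be the root of `t² + 1 = 2 (1 - z) t` with `0 < |t| < 1`; it has the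
sign of `1 - z`. Off the support of `v` an eigenfunction satisfies
`ψ(x + 1) + ψ(x - 1) = 2 (1 - z) ψ(x)`, and the only solutions of this recurrence on `ℕ` that tend
to `0` are geometric with ratio `t`. An even eigenfunction is therefore `c t^|x|` away from `0`,
and the equations at `x = 0, 1` make `z` an even eigenvalue exactly when `t` is a root of a cubic.
Under the hypotheses the cubic is positive on `(-1, 0)`, which excludes eigenvalues above `2`, and
has exactly one root in `(0, 1)`: it changes sign there (or factors through `t - 1` when
`μλ + μ + λ = 0`), and an identity between any two of its roots forces them to coincide.
-/

open MeasureTheory Real Filter Topology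

theorem Memℓp.tendsto_cofinite_zero {α E : Type*} [NormedAddCommGroup E] {p : ENNReal}
    {f : α → E} (hf : Memℓp f p) (hp : p ≠ ⊤) : Tendsto f cofinite (𝓝 0) := by
  rcases p.trichotomy with rfl | rfl | hp'
  · refine tendsto_const_nhds.congr' ?_
    filter_upwards [hf.finite_dsupport.eventually_cofinite_notMem] with i hi
    simpa [eq_comm] using hi
  · exact absurd rfl hp
  · rw [tendsto_zero_iff_norm_tendsto_zero]
    have h := ((hf.summable hp').tendsto_cofinite_zero).rpow_const (p := p.toReal⁻¹)
      (Or.inr (inv_nonneg.2 hp'.le))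
    rw [Real.zero_rpow (inv_ne_zero hp'.ne')] at h
    exact h.congr fun i => Real.rpow_rpow_inv (norm_nonneg _) hp'.ne'

theorem memℓp_pow_natAbs {𝕜 : Type*} [NormedField 𝕜] {r : 𝕜} (hr : ‖r‖ < 1) {p : ENNReal}
    (hp : 1 ≤ p) : Memℓp (fun x : ℤ => r ^ x.natAbs) p := by
  refine Memℓp.of_exponent_ge (memℓp_gen ?_) hp
  have hgeom := summable_geometric_of_lt_one (norm_nonneg r) hr
  simp only [ENNReal.toReal_one, Real.rpow_one, norm_pow]
  exact Summable.of_nat_of_neg (by simpa using hgeom) (by simpa using hgeom)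

theorem eq_pow_mul_of_recurrence_of_tendsto_zero {𝕜 : Type*} [NormedField 𝕜] {u : ℕ → 𝕜}
    {c t : 𝕜} (hchar : t ^ 2 + 1 = c * t) (ht : ‖t‖ < 1)
    (hrec : ∀ n, u (n + 2) + u n = c * u (n + 1)) (hu : Tendsto u atTop (𝓝 0)) (n : ℕ) :
    u n = t ^ n * u 0 := by
  -- `φ` measures the component of `u` along the growing solution `t⁻ⁿ`.
  set φ : ℕ → 𝕜 := fun n => u (n + 1) - t * u n with hφ
  have hφ_step (n : ℕ) : φ n = t * φ (n + 1) := by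
    simp only [hφ]
    linear_combination (-t) * hrec n + u (n + 1) * hchar
  have hφ_pow (k n : ℕ) : φ k = t ^ n * φ (n + k) := by
    induction n with
    | zero => simp
    | succ n ih => rw [ih, hφ_step, Nat.add_right_comm]; ring
  have hφ_tendsto : Tendsto φ atTop (𝓝 0) := by
    simpa using (hu.comp (tendsto_add_atTop_nat 1)).sub (hu.const_mul t)
  have hφ_zero (k : ℕ) : φ k = 0 := by
    have h := (tendsto_pow_atTop_nhds_zero_of_norm_lt_one ht).mul
      (hφ_tendsto.comp (tendsto_add_atTop_nat k))
    simp only [mul_zero, Function.comp_def, ← hφ_pow k] at h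
    exact tendsto_nhds_unique tendsto_const_nhds h
  induction n with
  | zero => simp
  | succ n ih => rw [sub_eq_zero.1 (hφ_zero n), ih]; ring

theorem exists_mem_Ioo_sq_add_one_eq {w : ℝ} (hw : 1 < w) :
    ∃ t ∈ Set.Ioo (0 : ℝ) 1, t ^ 2 + 1 = 2 * w * t := by
  set s := √(w ^ 2 - 1)
  have hs : s ^ 2 = w ^ 2 - 1 := Real.sq_sqrt (by nlinarith)
  have hs0 : 0 ≤ s := Real.sqrt_nonneg _
  exact ⟨w - s, ⟨by nlinarith, by nlinarith⟩, by linear_combination hs⟩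

/-- An even eigenfunction for `z`, with `t ^ 2 + 1 = 2 * (1 - z) * t` and `|t| < 1`, is `c t^|x|`
for `x ≠ 0`; the equations at `x = 0` and `x = 1` have a solution with `c ≠ 0` exactly when
`evenCubic μ lam t = 0`. -/
def evenCubic (μ lam t : ℝ) : ℝ := (lam * t + 1) * (t ^ 2 + 2 * μ * t + 1) - 2 * t ^ 2

section evenCubic

variable {μ lam : ℝ}

theorem evenCubic_pos (h2 : μ < 1) (h3 : 0 ≤ μ * lam - μ - lam) {t : ℝ} (ht1 : -1 < t)
    (ht0 : t < 0) : 0 < evenCubic μ lam t := by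
  obtain ⟨s, rfl⟩ : ∃ s, t = -s := ⟨-t, by ring⟩
  have hlam : 0 < 1 - lam := by nlinarith
  have hA : 0 < 1 - lam * s := by nlinarith
  have hB : 0 < (1 - μ) * (1 - lam * s) - s := by nlinarith [mul_pos (sub_pos.2 h2) hlam]
  have hsplit : evenCubic μ lam (-s)
      = (1 - lam * s) * (1 - s) ^ 2 + 2 * s * ((1 - μ) * (1 - lam * s) - s) := by
    unfold evenCubic; ring
  rw [hsplit]
  have hs : 0 < 2 * s := by linarith
  have hs1 : 0 < 1 - s := by linarith
  nlinarith [mul_pos hA (pow_pos hs1 2), mul_pos hs hB]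

theorem exists_evenCubic_eq_zero (h1 : μ * lam + μ + lam < 0 ∨ (μ * lam + μ + lam = 0 ∧ μ < -1)) :
    ∃ t ∈ Set.Ioo (0 : ℝ) 1, evenCubic μ lam t = 0 := by
  rcases h1 with hA | ⟨hA, hμ⟩
  · have hF1 : evenCubic μ lam 1 = 2 * (μ * lam + μ + lam) := by unfold evenCubic; ring
    have hF0 : evenCubic μ lam 0 = 1 := by unfold evenCubic; ring
    have hcont : ContinuousOn (evenCubic μ lam) (Set.Icc 0 1) := by
      unfold evenCubic; fun_prop
    exact intermediate_value_Ioo' zero_le_one hcont ⟨by linarith, by linarith⟩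
  · set q : ℝ → ℝ := fun t => lam * t ^ 2 + (lam + 2 * μ * lam - 1) * t - 1
    have hcont : ContinuousOn q (Set.Icc 0 1) := by fun_prop
    obtain ⟨t, ht, hqt⟩ := intermediate_value_Ioo zero_le_one hcont
      ⟨show q 0 < 0 by norm_num [q], show 0 < q 1 by simp only [q]; nlinarith⟩
    refine ⟨t, ht, ?_⟩
    have hfac : evenCubic μ lam t = (t - 1) * q t + 2 * (μ * lam + μ + lam) * t := by
      unfold evenCubic; ring
    rw [hfac, hqt, hA]; ring

theorem quadratic_pos_of_evenCubic_eq_zero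
    (h1 : μ * lam + μ + lam < 0 ∨ (μ * lam + μ + lam = 0 ∧ μ < -1)) {t : ℝ} (ht0 : 0 < t)
    (ht1 : t < 1) (hr : evenCubic μ lam t = 0) : 0 < t ^ 2 + 2 * μ * t + 1 := by
  set P := t ^ 2 + 2 * μ * t + 1 with hP
  have hA : μ * lam + μ + lam ≤ 0 := by rcases h1 with h | ⟨h, _⟩ <;> linarith
  have hroot : lam * t * P = 2 * t ^ 2 - P := by unfold evenCubic at hr; linear_combination hr
  by_contra! hPle
  have hPne : P ≠ 0 := by
    rintro hP0
    rw [hP0] at hroot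
    nlinarith
  have hPneg : P < 0 := lt_of_le_of_ne hPle hPne
  have hμ : μ + 1 < 0 := by nlinarith
  -- `(μλ + μ + λ) t P` is `≥ 0` by the signs of its factors, but `< 0` by this identity
  have hid : (μ * lam + μ + lam) * (t * P) = (t - 1) * ((μ + 1) * P + t * (1 - t)) := by
    linear_combination (μ + 1) * hroot
  have hneg : (t - 1) * ((μ + 1) * P + t * (1 - t)) < 0 :=
    mul_neg_of_neg_of_pos (by linarith) (by nlinarith)
  nlinarith [mul_nonneg_of_nonpos_of_nonpos hA (by nlinarith : t * P ≤ 0)]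

theorem eq_of_evenCubic_eq_zero (h1 : μ * lam + μ + lam < 0 ∨ (μ * lam + μ + lam = 0 ∧ μ < -1))
    {t₁ t₂ : ℝ} (ht₁ : t₁ ∈ Set.Ioo (0 : ℝ) 1) (ht₂ : t₂ ∈ Set.Ioo (0 : ℝ) 1)
    (hr₁ : evenCubic μ lam t₁ = 0) (hr₂ : evenCubic μ lam t₂ = 0) : t₁ = t₂ := by
  obtain ⟨h₁0, h₁1⟩ := ht₁
  obtain ⟨h₂0, h₂1⟩ := ht₂
  have hP₁ := quadratic_pos_of_evenCubic_eq_zero h1 h₁0 h₁1 hr₁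
  have hP₂ := quadratic_pos_of_evenCubic_eq_zero h1 h₂0 h₂1 hr₂
  have hid : (t₂ - t₁) * ((t₁ ^ 2 + 2 * μ * t₁ + 1) * (t₂ ^ 2 + 2 * μ * t₂ + 1)
      - 2 * t₁ * t₂ * (t₁ * t₂ - 1))
      = t₂ * (t₂ ^ 2 + 2 * μ * t₂ + 1) * evenCubic μ lam t₁
        - t₁ * (t₁ ^ 2 + 2 * μ * t₁ + 1) * evenCubic μ lam t₂ := by
    unfold evenCubic; ring
  have hpos : 0 < (t₁ ^ 2 + 2 * μ * t₁ + 1) * (t₂ ^ 2 + 2 * μ * t₂ + 1)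
      - 2 * t₁ * t₂ * (t₁ * t₂ - 1) := by
    have : t₁ * t₂ < 1 := by nlinarith
    nlinarith [mul_pos hP₁ hP₂, mul_pos (mul_pos h₁0 h₂0) (sub_pos.2 this)]
  rw [hr₁, hr₂, mul_zero, mul_zero, sub_zero] at hid
  linarith [(mul_eq_zero.1 hid).resolve_right hpos.ne']

end evenCubic

section pot

variable {μ lam : ℝ}

@[simp] theorem pot_zero : pot μ lam 0 = μ := by simp [pot]

@[simp] theorem pot_one : pot μ lam 1 = lam / 2 := by simp [pot]

theorem pot_neg (x : ℤ) : pot μ lam (-x) = pot μ lam x := by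
  unfold pot
  congr 1 <;> grind

theorem pot_of_two_le {x : ℤ} (hx : 2 ≤ x) : pot μ lam x = 0 := by
  unfold pot
  rw [if_neg (by omega), if_neg (by omega)]

end pot

def evenEigenfunction (lam t : ℝ) (x : ℤ) : ℂ :=
  (t : ℂ) ^ x.natAbs + (Pi.single 0 ((lam * t : ℝ) : ℂ) : ℤ → ℂ) x

section evenEigenfunction

variable {μ lam t : ℝ}

theorem evenEigenfunction_neg (x : ℤ) :
    evenEigenfunction lam t (-x) = evenEigenfunction lam t x := by
  simp [evenEigenfunction, Pi.single_apply]

theorem evenEigenfunction_of_ne_zero {x : ℤ} (hx : x ≠ 0) :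
    evenEigenfunction lam t x = (t : ℂ) ^ x.natAbs := by
  simp [evenEigenfunction, hx]

theorem memℓp_evenEigenfunction (ht : |t| < 1) : Memℓp (evenEigenfunction lam t) 2 :=
  (memℓp_pow_natAbs (by simpa using ht) one_le_two).add (lp.single 2 0 _).2

end evenEigenfunction

theorem evenEigenfunction_eigen {μ lam t z : ℝ} (hz : t ^ 2 + 1 = 2 * (1 - z) * t)
    (hr : evenCubic μ lam t = 0) (x : ℤ) :
    evenEigenfunction lam t x
        - (evenEigenfunction lam t (x + 1) + evenEigenfunction lam t (x - 1)) / 2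
        + (pot μ lam x : ℂ) * evenEigenfunction lam t x
      = (z : ℂ) * evenEigenfunction lam t x := by
  wlog hx : 0 ≤ x generalizing x
  · have h := this (-x) (by omega)
    rw [show -x + 1 = -(x - 1) by ring, show -x - 1 = -(x + 1) by ring, pot_neg,
      evenEigenfunction_neg, evenEigenfunction_neg, evenEigenfunction_neg] at h
    linear_combination h
  have htC : (t : ℂ) ≠ 0 := by
    rintro ht
    simp [Complex.ofReal_eq_zero.1 ht] at hz
  have hquad : (t : ℂ) ^ 2 + 1 = 2 * (1 - z) * t := by exact_mod_cast hz
  have hrC : ((lam * t + 1) * (t ^ 2 + 2 * μ * t + 1) - 2 * t ^ 2 : ℂ) = 0 := by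
    simpa [evenCubic] using congrArg ((↑) : ℝ → ℂ) hr
  rcases (by omega : x = 0 ∨ x = 1 ∨ 2 ≤ x) with rfl | rfl | hx2
  · have hx0 : ((lam * t + 1) * (1 + μ - z) : ℂ) = t := by
      refine mul_left_cancel₀ (mul_ne_zero two_ne_zero htC) ?_
      linear_combination hrC - (lam * t + 1 : ℂ) * hquad
    simp [evenEigenfunction]
    linear_combination hx0
  · simp [evenEigenfunction]
    linear_combination (-1 / 2 : ℂ) * hquad
  · rw [pot_of_two_le hx2, evenEigenfunction_of_ne_zero (by omega : x ≠ 0),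
      evenEigenfunction_of_ne_zero (by omega : x + 1 ≠ 0),
      evenEigenfunction_of_ne_zero (by omega : x - 1 ≠ 0),
      show (x + 1).natAbs = (x - 1).natAbs + 2 by omega,
      show x.natAbs = (x - 1).natAbs + 1 by omega, Complex.ofReal_zero]
    linear_combination (-1 / 2 : ℂ) * (t : ℂ) ^ (x - 1).natAbs * hquad

theorem lp_apply_add_one_eq_pow_mul {z t : ℝ} (ht : |t| < 1) (hz : t ^ 2 + 1 = 2 * (1 - z) * t)
    {p : ENNReal} (hp : p ≠ ⊤) (ψ : lp (fun _ : ℤ => ℂ) p)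
    (hψ : ∀ x : ℤ, 2 ≤ x → ψ (x + 1) + ψ (x - 1) = 2 * (1 - z) * ψ x)
    (n : ℕ) : ψ (n + 1) = t ^ n * ψ 1 := by
  set u : ℕ → ℂ := fun n => ψ (n + 1) with hu_def
  have hu_tendsto : Tendsto u atTop (𝓝 0) := by
    have hinj : Function.Injective fun n : ℕ => (n : ℤ) + 1 := fun a b h => by simpa using h
    exact ((lp.memℓp ψ).tendsto_cofinite_zero hp).comp
      (Nat.cofinite_eq_atTop ▸ hinj.tendsto_cofinite)
  have hrec (n : ℕ) : u (n + 2) + u n = 2 * (1 - z) * u (n + 1) := by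
    have h := hψ (n + 2) (by omega)
    rw [show (n : ℤ) + 2 - 1 = n + 1 by ring] at h
    simp only [hu_def]
    push_cast
    rw [show (n : ℤ) + 1 + 1 = n + 2 by ring]
    exact h
  simpa [hu_def] using eq_pow_mul_of_recurrence_of_tendsto_zero (by exact_mod_cast hz)
    (by simpa using ht) hrec hu_tendsto n

theorem evenCubic_eq_zero_of_isEvenEigenvalue {μ lam t z : ℝ} (ht : |t| < 1)
    (hz : t ^ 2 + 1 = 2 * (1 - z) * t) (h : IsEvenEigenvalue μ lam z) : evenCubic μ lam t = 0 := by
  obtain ⟨ψ, hψ_ne, hψ_even, hψ⟩ := h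
  have hquad : (t : ℂ) ^ 2 + 1 = 2 * (1 - z) * t := by exact_mod_cast hz
  have hu := lp_apply_add_one_eq_pow_mul ht hz ENNReal.ofNat_ne_top ψ fun x hx => by
    have h := hψ x
    rw [pot_of_two_le hx, Complex.ofReal_zero] at h
    linear_combination -2 * h
  have h0 := hψ 0
  rw [zero_add, zero_sub, hψ_even, pot_zero] at h0
  have h1 := hψ 1
  rw [show (1 : ℤ) + 1 = 2 by norm_num, sub_self, pot_one,
    show ψ 2 = t * ψ 1 by simpa using hu 1] at h1
  push_cast at h1
  have hψ1 : ψ 1 ≠ 0 := by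
    intro hψ1
    have hψ0 : ψ 0 = 0 := by linear_combination -2 * h1 + (2 - t + lam - 2 * z) * hψ1
    have hψ_pos {x : ℤ} (hx : 0 < x) : ψ x = 0 := by
      have h : ψ ((x - 1).toNat + 1) = 0 := by simpa [hψ1] using hu (x - 1).toNat
      rwa [Int.toNat_of_nonneg (by omega : 0 ≤ x - 1), sub_add_cancel] at h
    refine hψ_ne (lp.ext (funext fun x => ?_))
    rw [lp.coeFn_zero, Pi.zero_apply]
    rcases lt_trichotomy x 0 with hx | rfl | hx
    · rw [← hψ_even]
      exact hψ_pos (by omega)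
    · exact hψ0
    · exact hψ_pos hx
  have hcubic : ((evenCubic μ lam t : ℝ) : ℂ) * ψ 1 = 0 := by
    push_cast [evenCubic]
    -- modulo `hquad`, `λt + 1 = t (2 - t + λ - 2z)` and `t² + 2μt + 1 = 2t (1 + μ - z)`
    linear_combination 2 * t ^ 2 * h0 + 4 * t ^ 2 * (1 + μ - z) * h1
      + (t * (2 - t + lam - 2 * z) + 2 * t * (1 + μ - z) + (t ^ 2 + 1 - 2 * (1 - z) * t))
        * ψ 1 * hquad
  exact_mod_cast (mul_eq_zero.1 hcubic).resolve_right hψ1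

theorem isEvenEigenvalue_iff_evenCubic_eq_zero {μ lam t z : ℝ} (ht : |t| < 1)
    (hz : t ^ 2 + 1 = 2 * (1 - z) * t) : IsEvenEigenvalue μ lam z ↔ evenCubic μ lam t = 0 := by
  refine ⟨evenCubic_eq_zero_of_isEvenEigenvalue ht hz, fun hr => ?_⟩
  refine ⟨⟨evenEigenfunction lam t, memℓp_evenEigenfunction ht⟩, fun h => ?_,
    evenEigenfunction_neg, evenEigenfunction_eigen hz hr⟩
  have ht0 : (t : ℂ) = 0 := by
    simpa [evenEigenfunction] using congrArg (fun ψ : lp (fun _ : ℤ => ℂ) 2 => ψ 1) h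
  simp [Complex.ofReal_eq_zero.1 ht0] at hz

/-- Region `G_{10}`: assume either `μλ + μ + λ < 0` or (`μλ + μ + λ = 0` and `μ < −1`),
and `μ < 1` with `μλ − μ − λ ≥ 0`. Then `H_{μλ}` has no even eigenvalue in `(2, +∞)`,
and it has exactly one even eigenvalue outside `[0,2]`, which lies in `(−∞, 0)`. -/
theorem region_G10 (μ lam : ℝ)
    (h1 : μ * lam + μ + lam < 0 ∨ (μ * lam + μ + lam = 0 ∧ μ < -1))
    (h2 : μ < 1) (h3 : 0 ≤ μ * lam - μ - lam) :
    (∀ z : ℝ, 2 < z → ¬ IsEvenEigenvalue μ lam z) ∧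
    ∃ ζ : ℝ, ζ < 0 ∧ IsEvenEigenvalue μ lam ζ ∧
      ∀ z : ℝ, (z < 0 ∨ 2 < z) → IsEvenEigenvalue μ lam z → z = ζ := by
  have no_eigenvalue_above : ∀ z : ℝ, 2 < z → ¬ IsEvenEigenvalue μ lam z := by
    intro z hz hE
    obtain ⟨s, ⟨hs0, hs1⟩, hs⟩ := exists_mem_Ioo_sq_add_one_eq (w := z - 1) (by linarith)
    have hr := (isEvenEigenvalue_iff_evenCubic_eq_zero (t := -s)
      (by rwa [abs_neg, abs_of_pos hs0]) (by linear_combination hs)).1 hE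
    exact (evenCubic_pos h2 h3 (by linarith) (by linarith)).ne' hr
  obtain ⟨t₀, ⟨ht₀0, ht₀1⟩, hr₀⟩ := exists_evenCubic_eq_zero h1
  have hζ : t₀ ^ 2 + 1 = 2 * (1 - (1 - (t₀ ^ 2 + 1) / (2 * t₀))) * t₀ := by field_simp; ring
  refine ⟨no_eigenvalue_above, 1 - (t₀ ^ 2 + 1) / (2 * t₀), ?_,
    (isEvenEigenvalue_iff_evenCubic_eq_zero (abs_lt.2 ⟨by linarith, ht₀1⟩) hζ).2 hr₀, ?_⟩
  · rw [sub_neg, one_lt_div (by positivity)]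
    nlinarith
  rintro z (hz | hz) hE
  · obtain ⟨t, ht, htz⟩ := exists_mem_Ioo_sq_add_one_eq (w := 1 - z) (by linarith)
    have hr := (isEvenEigenvalue_iff_evenCubic_eq_zero (abs_lt.2 ⟨by linarith [ht.1], ht.2⟩)
      htz).1 hE
    obtain rfl := eq_of_evenCubic_eq_zero h1 ht ⟨ht₀0, ht₀1⟩ hr hr₀
    field_simp
    linarith
  · exact absurd hE (no_eigenvalue_above z hz)
end
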